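/- Fix positive constants $L, V^d, \beta, V^c, R$. Define $\hat{D}(t, V) = \max\{\hat{D}_1(tR, V), \hat{D}_2(tR)\}$ where $\hat{D}_1(r,V) = \frac{L}{r}\frac{(r+V)(r+\beta V^d)}{V^d V(1+\beta) + r(V^d+V)}$ and $\hat{D}_2(r) = \frac{L}{r}\frac{r+\beta V^d}{V^d+r}$. Then $\hat{D}$ is a continuous convex function of $(t, V)$ on $(0,\infty)^2$, and $\hat{D}(t,V) = \hat{D}_1(tR,V)$ when $(tR)^2 \ge \beta V^d V$ while $\hat{D}(t,V) = \hat{D}_2(tR)$ when $(tR)^2 < \beta V^d V$. -/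

import Mathlib

/-!
Write `r = tR`. Clearing denominators gives
`L / D̂₁(r, V) = r V^d / (r + β V^d) + r V / (r + V)`, a sum of terms of the form
`H(u, v) = u v / (u + v)` evaluated at concave arguments. `H` is jointly concave and increasing
in each argument on the positive quadrant, so `L / D̂₁` is concave and positive and `D̂₁` is
convex. Since `β < 1`, `D̂₂(r) = L β / r + L (1 - β) / (V^d + r)` is a sum of convex functions.
The maximum of the two is convex, hence continuous on the open quadrant. Finally
`(r + V)(V^d + r) - (V^d V (1 + β) + r (V^d + V)) = r² - β V^d V`, so `D̂₁ ≥ D̂₂` exactly when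
`r² ≥ β V^d V`.
-/

open Set

lemma mul_div_add_le_mul_div_add {u v u' v' : ℝ} (hu : 0 < u) (hv : 0 < v)
    (huu' : u ≤ u') (hvv' : v ≤ v') : u * v / (u + v) ≤ u' * v' / (u' + v') := by
  rw [div_le_div_iff₀ (by positivity) (by linarith)]
  nlinarith [mul_le_mul_of_nonneg_left hvv' (mul_nonneg hu.le (hu.le.trans huu')),
    mul_le_mul_of_nonneg_left huu' (mul_nonneg hv.le (hv.le.trans hvv'))]

theorem concaveOn_mul_div_add :
    ConcaveOn ℝ (Ioi 0 ×ˢ Ioi 0) fun p : ℝ × ℝ => p.1 * p.2 / (p.1 + p.2) := by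
  refine ⟨(convex_Ioi 0).prod (convex_Ioi 0), ?_⟩
  rintro ⟨x₁, y₁⟩ ⟨hx₁, hy₁⟩ ⟨x₂, y₂⟩ ⟨hx₂, hy₂⟩ a b ha hb hab
  simp only [mem_Ioi] at hx₁ hy₁ hx₂ hy₂
  simp only [Prod.smul_mk, Prod.mk_add_mk, smul_eq_mul]
  obtain rfl : b = 1 - a := by linarith
  have hx : 0 < a * x₁ + (1 - a) * x₂ := convex_Ioi (0 : ℝ) hx₁ hx₂ ha hb hab
  have hy : 0 < a * y₁ + (1 - a) * y₂ := convex_Ioi (0 : ℝ) hy₁ hy₂ ha hb hab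
  rw [mul_div_assoc', mul_div_assoc', div_add_div _ _ (by positivity) (by positivity),
    div_le_div_iff₀ (by positivity) (by positivity)]
  -- after clearing denominators the gap is exactly `a (1 - a) (x₁ y₂ - x₂ y₁)²`
  nlinarith [mul_nonneg (mul_nonneg ha hb) (sq_nonneg (x₁ * y₂ - x₂ * y₁))]

section

variable {E : Type*} [AddCommGroup E] [Module ℝ E] {s : Set E}

theorem ConcaveOn.mul_div_add {f g : E → ℝ} (hf : ConcaveOn ℝ s f) (hg : ConcaveOn ℝ s g)
    (hf₀ : ∀ x ∈ s, 0 < f x) (hg₀ : ∀ x ∈ s, 0 < g x) :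
    ConcaveOn ℝ s fun x => f x * g x / (f x + g x) := by
  refine ⟨hf.1, fun x hx y hy a b ha hb hab => ?_⟩
  have hH := concaveOn_mul_div_add.2 (x := (f x, g x)) (y := (f y, g y))
    ⟨hf₀ x hx, hg₀ x hx⟩ ⟨hf₀ y hy, hg₀ y hy⟩ ha hb hab
  simp only [Prod.smul_mk, Prod.mk_add_mk, smul_eq_mul] at hH ⊢
  exact hH.trans <| mul_div_add_le_mul_div_add
    (convex_Ioi (0 : ℝ) (hf₀ x hx) (hf₀ y hy) ha hb hab)
    (convex_Ioi (0 : ℝ) (hg₀ x hx) (hg₀ y hy) ha hb hab)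
    (hf.2 hx hy ha hb hab) (hg.2 hx hy ha hb hab)

theorem ConcaveOn.convexOn_const_div {g : E → ℝ} {c : ℝ} (hc : 0 ≤ c) (hg : ConcaveOn ℝ s g)
    (hg₀ : ∀ x ∈ s, 0 < g x) : ConvexOn ℝ s fun x => c / g x := by
  have hinv : ConvexOn ℝ (Ioi 0) fun y : ℝ => c / y :=
    ((convexOn_zpow (-1)).smul hc).congr fun y _ => by simp [div_eq_mul_inv]
  refine ⟨hg.1, fun x hx y hy a b ha hb hab => ?_⟩
  have hcomb : 0 < a * g x + b * g y := convex_Ioi (0 : ℝ) (hg₀ x hx) (hg₀ y hy) ha hb hab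
  calc c / g (a • x + b • y) ≤ c / (a * g x + b * g y) :=
        div_le_div_of_nonneg_left hc hcomb (hg.2 hx hy ha hb hab)
    _ ≤ a • (c / g x) + b • (c / g y) := hinv.2 (hg₀ x hx) (hg₀ y hy) ha hb hab

end

-- `D̂₁(r, V)` and `D̂₂(r)` at channel rate `r`.
noncomputable def delay₁ (L Vd β r V : ℝ) : ℝ :=
  L / r * ((r + V) * (r + β * Vd) / (Vd * V * (1 + β) + r * (Vd + V)))

noncomputable def delay₂ (L Vd β r : ℝ) : ℝ :=
  L / r * ((r + β * Vd) / (Vd + r))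

section

variable {L Vd β : ℝ}

theorem delay₁_eq_div_add {r V : ℝ} (hVd : 0 < Vd) (hβ : 0 < β) (hr : 0 < r) (hV : 0 < V) :
    delay₁ L Vd β r V = L / (β⁻¹ * (r * (β * Vd) / (r + β * Vd)) + r * V / (r + V)) := by
  have hW : 0 < Vd * V * (1 + β) + r * (Vd + V) := by positivity
  unfold delay₁
  field_simp
  ring

theorem delay₂_eq_add {r : ℝ} (hVd : 0 < Vd) (hr : 0 < r) :
    delay₂ L Vd β r = L * β / r + L * (1 - β) / (Vd + r) := by
  unfold delay₂
  field_simp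
  ring

theorem delay₂_le_delay₁_iff {r V : ℝ} (hL : 0 < L) (hVd : 0 < Vd) (hβ : 0 < β) (hr : 0 < r)
    (hV : 0 < V) : delay₂ L Vd β r ≤ delay₁ L Vd β r V ↔ β * Vd * V ≤ r ^ 2 := by
  have hW : 0 < Vd * V * (1 + β) + r * (Vd + V) := by positivity
  unfold delay₁ delay₂
  rw [mul_le_mul_iff_right₀ (by positivity), div_le_div_iff₀ (by positivity) hW, ← sub_nonneg,
    show (r + V) * (r + β * Vd) * (Vd + r) - (r + β * Vd) * (Vd * V * (1 + β) + r * (Vd + V))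
      = (r + β * Vd) * (r ^ 2 - β * Vd * V) by ring,
    mul_nonneg_iff_of_pos_left (by positivity), sub_nonneg]

variable {R : ℝ}

theorem convexOn_delay₁ (hL : 0 ≤ L) (hVd : 0 < Vd) (hβ : 0 < β) (hR : 0 < R) :
    ConvexOn ℝ (Ioi 0 ×ˢ Ioi 0) fun p : ℝ × ℝ => delay₁ L Vd β (p.1 * R) p.2 := by
  have hS : Convex ℝ (Ioi (0 : ℝ) ×ˢ Ioi (0 : ℝ)) := (convex_Ioi 0).prod (convex_Ioi 0)
  have hrate : ConcaveOn ℝ (Ioi 0 ×ˢ Ioi 0) fun p : ℝ × ℝ => p.1 * R :=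
    ((LinearMap.fst ℝ ℝ ℝ).smulRight R).concaveOn hS
  have hrate₀ : ∀ p ∈ Ioi (0 : ℝ) ×ˢ Ioi (0 : ℝ), 0 < p.1 * R := fun p hp => mul_pos hp.1 hR
  have hg : ConcaveOn ℝ (Ioi 0 ×ˢ Ioi 0) fun p : ℝ × ℝ =>
      β⁻¹ * (p.1 * R * (β * Vd) / (p.1 * R + β * Vd)) + p.1 * R * p.2 / (p.1 * R + p.2) :=
    ((hrate.mul_div_add (concaveOn_const _ hS) hrate₀ fun _ _ => by positivity).smul
      (inv_nonneg.2 hβ.le)).add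
      (hrate.mul_div_add ((LinearMap.snd ℝ ℝ ℝ).concaveOn hS) hrate₀ fun p hp => hp.2)
  refine (hg.convexOn_const_div hL ?_).congr ?_
  · rintro ⟨t, V⟩ ⟨ht, hV⟩
    have hr : 0 < t * R := mul_pos ht hR
    have hV : 0 < V := hV
    positivity
  · rintro ⟨t, V⟩ ⟨ht, hV⟩
    exact (delay₁_eq_div_add hVd hβ (mul_pos ht hR) hV).symm

theorem convexOn_delay₂ (hL : 0 ≤ L) (hVd : 0 < Vd) (hβ₀ : 0 < β) (hβ₁ : β < 1) (hR : 0 < R) :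
    ConvexOn ℝ (Ioi 0 ×ˢ Ioi 0) fun p : ℝ × ℝ => delay₂ L Vd β (p.1 * R) := by
  have hS : Convex ℝ (Ioi (0 : ℝ) ×ˢ Ioi (0 : ℝ)) := (convex_Ioi 0).prod (convex_Ioi 0)
  have hrate : ConcaveOn ℝ (Ioi 0 ×ˢ Ioi 0) fun p : ℝ × ℝ => p.1 * R :=
    ((LinearMap.fst ℝ ℝ ℝ).smulRight R).concaveOn hS
  have hrate₀ : ∀ p ∈ Ioi (0 : ℝ) ×ˢ Ioi (0 : ℝ), 0 < p.1 * R := fun p hp => mul_pos hp.1 hR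
  have hshift : ConcaveOn ℝ (Ioi 0 ×ˢ Ioi 0) fun p : ℝ × ℝ => Vd + p.1 * R :=
    (concaveOn_const Vd hS).add hrate
  refine ((hrate.convexOn_const_div (c := L * β) (by positivity) hrate₀).add
    (hshift.convexOn_const_div (mul_nonneg hL (sub_nonneg.2 hβ₁.le))
      fun p hp => add_pos hVd (hrate₀ p hp))).congr fun p hp => ?_
  exact (delay₂_eq_add hVd (hrate₀ p hp)).symm

end

theorem Dhat_convex_and_branches_general
    (L Vd R β : ℝ)
    (hL : 0 < L) (hVd : 0 < Vd) (hR : 0 < R)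
    (hβ0 : 0 < β) (hβ1 : β < 1)
    (D1 : ℝ → ℝ → ℝ) (D2 : ℝ → ℝ) (Dhat : ℝ × ℝ → ℝ)
    (hD1 : ∀ r V, D1 r V = L / r * ((r + V) * (r + β * Vd) /
      (Vd * V * (1 + β) + r * (Vd + V))))
    (hD2 : ∀ r, D2 r = L / r * ((r + β * Vd) / (Vd + r)))
    (hDhat : ∀ p : ℝ × ℝ, Dhat p = max (D1 (p.1 * R) p.2) (D2 (p.1 * R))) :
    ContinuousOn Dhat (Set.Ioi 0 ×ˢ Set.Ioi 0) ∧
    ConvexOn ℝ (Set.Ioi 0 ×ˢ Set.Ioi 0) Dhat ∧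
    (∀ t V : ℝ, 0 < t → 0 < V → β * Vd * V ≤ (t * R) ^ 2 →
      Dhat (t, V) = D1 (t * R) V) ∧
    (∀ t V : ℝ, 0 < t → 0 < V → (t * R) ^ 2 < β * Vd * V →
      Dhat (t, V) = D2 (t * R)) := by
  obtain rfl : D1 = delay₁ L Vd β := funext₂ hD1
  obtain rfl : D2 = delay₂ L Vd β := funext hD2
  obtain rfl : Dhat = fun p => max (delay₁ L Vd β (p.1 * R) p.2) (delay₂ L Vd β (p.1 * R)) :=
    funext hDhat
  have hconv : ConvexOn ℝ (Ioi 0 ×ˢ Ioi 0) fun p : ℝ × ℝ =>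
      max (delay₁ L Vd β (p.1 * R) p.2) (delay₂ L Vd β (p.1 * R)) :=
    (convexOn_delay₁ hL.le hVd hβ0 hR).sup (convexOn_delay₂ hL.le hVd hβ0 hβ1 hR)
  refine ⟨hconv.continuousOn (isOpen_Ioi.prod isOpen_Ioi), hconv, fun t V ht hV h => ?_,
    fun t V ht hV h => ?_⟩
  · exact max_eq_left ((delay₂_le_delay₁_iff hL hVd hβ0 (mul_pos ht hR) hV).2 h)
  · exact max_eq_right (not_le.1 <| mt (delay₂_le_delay₁_iff hL hVd hβ0 (mul_pos ht hR) hV).1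
      (not_le.2 h)).le

theorem Dhat_convex_and_branches
    (L Vd Vc R β : ℝ)
    (hL : 0 < L) (hVd : 0 < Vd) (hVc : 0 < Vc) (hR : 0 < R)
    (hβ0 : 0 < β) (hβ1 : β < 1)
    (D1 : ℝ → ℝ → ℝ) (D2 : ℝ → ℝ) (Dhat : ℝ × ℝ → ℝ)
    (hD1 : ∀ r V, D1 r V = L / r * ((r + V) * (r + β * Vd) /
      (Vd * V * (1 + β) + r * (Vd + V))))
    (hD2 : ∀ r, D2 r = L / r * ((r + β * Vd) / (Vd + r)))
    (hDhat : ∀ p : ℝ × ℝ, Dhat p = max (D1 (p.1 * R) p.2) (D2 (p.1 * R))) :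
    ContinuousOn Dhat (Set.Ioi 0 ×ˢ Set.Ioi 0) ∧
    ConvexOn ℝ (Set.Ioi 0 ×ˢ Set.Ioi 0) Dhat ∧
    (∀ t V : ℝ, 0 < t → 0 < V → β * Vd * V ≤ (t * R) ^ 2 →
      Dhat (t, V) = D1 (t * R) V) ∧
    (∀ t V : ℝ, 0 < t → 0 < V → (t * R) ^ 2 < β * Vd * V →
      Dhat (t, V) = D2 (t * R)) :=
  Dhat_convex_and_branches_general L Vd R β hL hVd hR hβ0 hβ1 D1 D2 Dhat hD1 hD2 hDhat
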